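/- Series stochastic integral: if Ψ = (Ψ_i) is a sequence of adapted PUC integrands with ∫₀ᵀ Σ_i E|Ψ_i(τ)|² dτ < ∞, then Σ_i ∫₀ᵀ Ψ_i(τ)dW_i(τ) converges in L²(Ω;H) and E|Σ_i ∫₀ᵀ Ψ_i dW_i|²_H = ∫₀ᵀ Σ_i E|Ψ_i(τ)|²_H dτ. -/

import Mathlib

/-! In `L²(Ω;H)` the single integrals `I i` are pairwise orthogonal and, by the Itô isometry,
`‖I i‖² = ∫₀ᵀ E|Ψ_i(τ)|² dτ`. Dominated convergence (dominated by `Σ_i E|Ψ_i|²`) gives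
`Σ_i ‖I i‖² = ∫₀ᵀ Σ_i E|Ψ_i(τ)|² dτ`, and an orthogonal family with summable squared norms is
summable in a Hilbert space, with Pythagoras passing to the sum. Piecewise uniform continuity is
what makes `τ ↦ E|Ψ_i(τ)|²` measurable, hence integrable under that domination. -/

open MeasureTheory ProbabilityTheory Filter

variable {Ω : Type*} [MeasurableSpace Ω]
  {H : Type*} [NormedAddCommGroup H] [InnerProductSpace ℝ H] [CompleteSpace H]

/-- `Ψ : [0,T] → L²(Ω;H)` is piecewise uniformly continuous. -/
def PUCon (P : Measure Ω) (T : ℝ) (Ψ : ℝ → Ω → H) : Prop :=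
  ∃ (m : ℕ) (a : ℕ → ℝ), a 0 = 0 ∧ a m = T ∧ (∀ i < m, a i < a (i + 1)) ∧
    ∀ i < m, ∀ ε : ℝ, 0 < ε → ∃ δ : ℝ, 0 < δ ∧
      ∀ s ∈ Set.Ioo (a i) (a (i + 1)), ∀ t ∈ Set.Ioo (a i) (a (i + 1)),
        |s - t| < δ → ∫ ω, ‖Ψ s ω - Ψ t ω‖ ^ 2 ∂P < ε

/-- `I` is the `L²(Ω;H)`-limit of left-endpoint Riemann sums of `Ψ` against `W` on `[0,T]`. -/
def IsStochInt (P : Measure Ω) (T : ℝ) (W : ℝ → Ω → ℝ) (Ψ : ℝ → Ω → H) (I : Ω → H) : Prop :=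
  ∀ ε : ℝ, 0 < ε → ∃ δ : ℝ, 0 < δ ∧ ∀ (k : ℕ) (τ : ℕ → ℝ),
    τ 0 = 0 → τ k = T → (∀ i < k, τ i < τ (i + 1)) → (∀ i < k, τ (i + 1) - τ i < δ) →
    ∫ ω, ‖(∑ i ∈ Finset.range k, (W (τ (i + 1)) ω - W (τ i) ω) • Ψ (τ i) ω) - I ω‖ ^ 2 ∂P < ε

/-- `W` is a standard scalar `(F_t)`-Wiener process. -/
def IsWiener (P : Measure Ω) (F : ℝ → MeasurableSpace Ω) (W : ℝ → Ω → ℝ) : Prop :=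
  (∀ t : ℝ, Measurable[F t] (W t)) ∧ (∀ ω, W 0 ω = 0) ∧ (∀ t : ℝ, MemLp (W t) 2 P) ∧
  (∀ s t : ℝ, 0 ≤ s → s ≤ t →
    Indep (F s) (MeasurableSpace.comap (fun ω => W t ω - W s ω) inferInstance) P) ∧
  (∀ s t : ℝ, 0 ≤ s → s ≤ t → ∫ ω, (W t ω - W s ω) ∂P = 0) ∧
  (∀ s t : ℝ, 0 ≤ s → s ≤ t → ∫ ω, (W t ω - W s ω) ^ 2 ∂P = t - s)

open scoped InnerProductSpace Interval

theorem summable_and_norm_tsum_sq_of_pairwise_inner_eq_zero {E ι : Type*} [NormedAddCommGroup E]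
    [InnerProductSpace ℝ E] [CompleteSpace E] {v : ι → E} {c : ℝ}
    (horth : Pairwise fun i j => ⟪v i, v j⟫_ℝ = 0) (hc : HasSum (fun i => ‖v i‖ ^ 2) c) :
    Summable v ∧ ‖∑' i, v i‖ ^ 2 = c := by
  have hV : OrthogonalFamily ℝ (fun i => ℝ ∙ v i) fun i => (ℝ ∙ v i).subtypeₗᵢ :=
    OrthogonalFamily.of_pairwise fun i j hij => Submodule.isOrtho_span.2 fun x hx y hy => by
      rw [Set.mem_singleton_iff.1 hx, Set.mem_singleton_iff.1 hy]
      exact horth hij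
  let l : ∀ i, ℝ ∙ v i := fun i => ⟨v i, Submodule.mem_span_singleton_self _⟩
  have hv : Summable v := (hV.summable_iff_norm_sq_summable l).2 hc.summable
  have hpyth : ∀ s : Finset ι, ‖∑ i ∈ s, v i‖ ^ 2 = ∑ i ∈ s, ‖v i‖ ^ 2 := hV.norm_sum l
  refine ⟨hv, tendsto_nhds_unique (hv.hasSum.norm.pow 2) ?_⟩
  simpa only [HasSum, hpyth] using hc

namespace MeasureTheory

theorem Lp.norm_sq_eq_integral_norm_sq {α E : Type*} [MeasurableSpace α] {μ : Measure α}
    [NormedAddCommGroup E] [InnerProductSpace ℝ E] {f : Lp E 2 μ} {g : α → E}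
    (hfg : f =ᵐ[μ] g) : ‖f‖ ^ 2 = ∫ x, ‖g x‖ ^ 2 ∂μ := by
  rw [← real_inner_self_eq_norm_sq, L2.inner_def]
  exact integral_congr_ae <| hfg.mono fun x hx => by simp only [hx, real_inner_self_eq_norm_sq]

theorem uniformContinuousOn_toLp_of_integral_norm_sub_sq {α E : Type*} [MeasurableSpace α]
    {μ : Measure α} [NormedAddCommGroup E] [InnerProductSpace ℝ E] {Ψ : ℝ → α → E} {S : Set ℝ}
    (hΨ : ∀ t, MemLp (Ψ t) 2 μ)
    (huc : ∀ ε : ℝ, 0 < ε → ∃ δ : ℝ, 0 < δ ∧ ∀ s ∈ S, ∀ t ∈ S,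
      |s - t| < δ → ∫ x, ‖Ψ s x - Ψ t x‖ ^ 2 ∂μ < ε) :
    UniformContinuousOn (fun t => (hΨ t).toLp (Ψ t)) S := by
  rw [Metric.uniformContinuousOn_iff]
  intro ε hε
  obtain ⟨δ, hδ, hclose⟩ := huc (ε ^ 2) (by positivity)
  refine ⟨δ, hδ, fun s hs t ht hst => lt_of_pow_lt_pow_left₀ 2 hε.le ?_⟩
  rw [dist_eq_norm, ← MemLp.toLp_sub,
    Lp.norm_sq_eq_integral_norm_sq ((hΨ s).sub (hΨ t)).coeFn_toLp]
  exact hclose s hs t ht hst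

end MeasureTheory

theorem intervalIntegrable_of_continuousOn_Ioo_of_norm_le {E : Type*} [NormedAddCommGroup E]
    {μ : Measure ℝ} [NullSingletonClass μ] {f : ℝ → E} {g : ℝ → ℝ} {a b : ℝ} (hab : a ≤ b)
    (hf : ContinuousOn f (Set.Ioo a b)) (hg : IntervalIntegrable g μ a b)
    (hfg : ∀ t ∈ Set.Ioo a b, ‖f t‖ ≤ g t) : IntervalIntegrable f μ a b := by
  rw [intervalIntegrable_iff_integrableOn_Ioo_of_le hab] at hg ⊢
  exact hg.mono' (hf.aestronglyMeasurable measurableSet_Ioo)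
    (ae_restrict_of_forall_mem measurableSet_Ioo hfg)

theorem intervalIntegral.hasSum_integral_of_nonneg {ι : Type*} [Countable ι] {μ : Measure ℝ}
    {f : ι → ℝ → ℝ} {a b : ℝ} (hf : ∀ i, IntervalIntegrable (f i) μ a b)
    (hnonneg : ∀ i, ∀ t ∈ Ι a b, 0 ≤ f i t) (hsum : ∀ t ∈ Ι a b, Summable fun i => f i t)
    (hint : IntervalIntegrable (fun t => ∑' i, f i t) μ a b) :
    HasSum (fun i => ∫ t in a..b, f i t ∂μ) (∫ t in a..b, ∑' i, f i t ∂μ) :=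
  hasSum_integral_of_dominated_convergence f (fun i => (hf i).def'.aestronglyMeasurable)
    (fun i => ae_of_all _ fun t ht => (Real.norm_of_nonneg (hnonneg i t ht)).le)
    (ae_of_all _ hsum) hint (ae_of_all _ fun t ht => (hsum t ht).hasSum)

theorem PUCon.intervalIntegrable_integral_norm_sq {E : Type*} [NormedAddCommGroup E]
    [InnerProductSpace ℝ E] {P : Measure Ω} {T : ℝ} {Ψ : ℝ → Ω → E}
    (hPUC : PUCon P T Ψ) (hΨ : ∀ t, MemLp (Ψ t) 2 P) {g : ℝ → ℝ}
    (hg : IntervalIntegrable g volume 0 T)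
    (hle : ∀ t ∈ Set.Icc 0 T, ∫ ω, ‖Ψ t ω‖ ^ 2 ∂P ≤ g t) :
    IntervalIntegrable (fun t => ∫ ω, ‖Ψ t ω‖ ^ 2 ∂P) volume 0 T := by
  obtain ⟨m, a, ha0, hmT, hlt, huc⟩ := hPUC
  have hmono : MonotoneOn a (Set.Iic m) := (strictMonoOn_Iic_of_lt_succ hlt).monotoneOn
  rw [← ha0, ← hmT] at hg hle ⊢
  refine IntervalIntegrable.trans_iterate fun j hj => ?_
  have hpiece : Set.Icc (a j) (a (j + 1)) ⊆ Set.Icc (a 0) (a m) :=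
    Set.Icc_subset_Icc (hmono (Set.mem_Iic.2 m.zero_le) (Set.mem_Iic.2 hj.le) j.zero_le)
      (hmono (Set.mem_Iic.2 hj) (Set.mem_Iic.2 le_rfl) hj)
  have hcont : ContinuousOn (fun t => ∫ ω, ‖Ψ t ω‖ ^ 2 ∂P) (Set.Ioo (a j) (a (j + 1))) :=
    (((uniformContinuousOn_toLp_of_integral_norm_sub_sq hΨ (huc j hj)).continuousOn).norm.pow
      2).congr fun t _ => (Lp.norm_sq_eq_integral_norm_sq (hΨ t).coeFn_toLp).symm
  refine intervalIntegrable_of_continuousOn_Ioo_of_norm_le (g := g) (hlt j hj).le hcont ?_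
    fun t ht => ?_
  · refine hg.mono_set ?_
    rwa [Set.uIcc_of_le (hlt j hj).le,
      Set.uIcc_of_le (hmono (Set.mem_Iic.2 m.zero_le) (Set.mem_Iic.2 le_rfl) m.zero_le)]
  · rw [Real.norm_of_nonneg (integral_nonneg fun ω => sq_nonneg _)]
    exact hle t (hpiece (Set.Ioo_subset_Icc_self ht))

theorem series_stochastic_integral_general
    (P : Measure Ω)
    (T : ℝ) (hT : 0 < T)
    (Ψ : ℕ → ℝ → Ω → H)
    (hL2 : ∀ i, ∀ t : ℝ, MemLp (Ψ i t) 2 P)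
    (hPUC : ∀ i, PUCon P T (Ψ i))
    -- `∫₀ᵀ Σ_i E|Ψ_i(τ)|² dτ < ∞`
    (hsummable : ∀ t ∈ Set.Icc (0:ℝ) T, Summable fun i : ℕ => ∫ ω, ‖Ψ i t ω‖ ^ 2 ∂P)
    (hfin : IntervalIntegrable (fun t => ∑' i : ℕ, ∫ ω, ‖Ψ i t ω‖ ^ 2 ∂P)
      MeasureTheory.volume 0 T)
    -- the single stochastic integrals `I i = ∫₀ᵀ Ψ_i dW_i`, satisfying the Itô isometry
    -- and pairwise orthogonality
    (I : ℕ → Ω → H) (hImem : ∀ i, MemLp (I i) 2 P)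
    (hIiso : ∀ i, ∫ ω, ‖I i ω‖ ^ 2 ∂P = ∫ t in (0:ℝ)..T, ∫ ω, ‖Ψ i t ω‖ ^ 2 ∂P)
    (hIorth : ∀ i j : ℕ, i ≠ j → ∫ ω, (inner ℝ (I i ω) (I j ω) : ℝ) ∂P = 0) :
    ∃ J : Ω → H, MemLp J 2 P ∧
      Tendsto (fun n : ℕ =>
        ∫ ω, ‖(∑ i ∈ Finset.range n, I i ω) - J ω‖ ^ 2 ∂P) atTop (nhds 0) ∧
      ∫ ω, ‖J ω‖ ^ 2 ∂P = ∫ t in (0:ℝ)..T, ∑' i : ℕ, ∫ ω, ‖Ψ i t ω‖ ^ 2 ∂P := by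
  have hnonneg : ∀ i t, 0 ≤ ∫ ω, ‖Ψ i t ω‖ ^ 2 ∂P := fun i t =>
    integral_nonneg fun ω => sq_nonneg _
  have hint : ∀ i, IntervalIntegrable (fun t => ∫ ω, ‖Ψ i t ω‖ ^ 2 ∂P) volume 0 T := fun i =>
    (hPUC i).intervalIntegrable_integral_norm_sq (hL2 i) hfin fun t ht =>
      (hsummable t ht).le_tsum i fun j _ => hnonneg j t
  let u : ℕ → Lp H 2 P := fun i => (hImem i).toLp (I i)
  have hu_coe : ∀ᵐ ω ∂P, ∀ i, u i ω = I i ω := ae_all_iff.2 fun i => (hImem i).coeFn_toLp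
  have hnorm : HasSum (fun i => ‖u i‖ ^ 2) (∫ t in (0:ℝ)..T, ∑' i, ∫ ω, ‖Ψ i t ω‖ ^ 2 ∂P) := by
    simp only [u, Lp.norm_sq_eq_integral_norm_sq (hImem _).coeFn_toLp, hIiso]
    exact intervalIntegral.hasSum_integral_of_nonneg hint (fun i t _ => hnonneg i t)
      (fun t ht => hsummable t (Set.Ioc_subset_Icc_self (Set.uIoc_of_le hT.le ▸ ht))) hfin
  have horth : Pairwise fun i j => ⟪u i, u j⟫_ℝ = 0 := fun i j hij => by
    change ⟪u i, u j⟫_ℝ = 0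
    rw [L2.inner_def, ← hIorth i j hij]
    exact integral_congr_ae <| hu_coe.mono fun ω h => by simp only [h]
  obtain ⟨hu, hnorm_tsum⟩ := summable_and_norm_tsum_sq_of_pairwise_inner_eq_zero horth hnorm
  refine ⟨⇑(∑' i, u i), Lp.memLp _, ?_, ?_⟩
  · have hdist : ∀ n, ‖∑ i ∈ Finset.range n, u i - ∑' i, u i‖ ^ 2
        = ∫ ω, ‖(∑ i ∈ Finset.range n, I i ω) - (∑' i, u i) ω‖ ^ 2 ∂P := fun n => by
      refine Lp.norm_sq_eq_integral_norm_sq ?_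
      filter_upwards [Lp.coeFn_sub (∑ i ∈ Finset.range n, u i) (∑' i, u i),
        Lp.coeFn_finsetSum (Finset.range n) u, hu_coe] with ω hsub hsum hcoe
      simp only [hsub, Pi.sub_apply, hsum, Finset.sum_apply, hcoe]
    simpa only [hdist, sub_self, norm_zero, zero_pow two_ne_zero] using
      (hu.hasSum.tendsto_sum_nat.sub_const (∑' i, u i)).norm.pow 2
  · rw [← hnorm_tsum, Lp.norm_sq_eq_integral_norm_sq (EventuallyEq.refl _ _)]

/-- Series stochastic integral: if `Ψ = (Ψ_i)` is a sequence of adapted PUC integrands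
with `∫₀ᵀ Σ_i E|Ψ_i(τ)|² dτ < ∞`, then `Σ_i ∫₀ᵀ Ψ_i dW_i` converges in `L²(Ω;H)` and
`E|Σ_i ∫₀ᵀ Ψ_i dW_i|² = ∫₀ᵀ Σ_i E|Ψ_i(τ)|² dτ`. -/
theorem series_stochastic_integral
    [SecondCountableTopology H] [MeasurableSpace H] [BorelSpace H]
    (P : Measure Ω) [IsProbabilityMeasure P]
    (F : ℝ → MeasurableSpace Ω)
    (hFmono : ∀ s t : ℝ, s ≤ t → F s ≤ F t)
    (hFle : ∀ t : ℝ, F t ≤ ‹MeasurableSpace Ω›)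
    (W : ℕ → ℝ → Ω → ℝ) (hW : ∀ i, IsWiener P F (W i))
    (hWindep : iIndep (fun i : ℕ =>
      ⨆ t : ℝ, MeasurableSpace.comap (W i t) inferInstance) P)
    (T : ℝ) (hT : 0 < T)
    (Ψ : ℕ → ℝ → Ω → H)
    (hadapted : ∀ i, ∀ t : ℝ, StronglyMeasurable[F t] (Ψ i t))
    (hL2 : ∀ i, ∀ t : ℝ, MemLp (Ψ i t) 2 P)
    (hPUC : ∀ i, PUCon P T (Ψ i))
    -- `∫₀ᵀ Σ_i E|Ψ_i(τ)|² dτ < ∞`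
    (hsummable : ∀ t ∈ Set.Icc (0:ℝ) T, Summable fun i : ℕ => ∫ ω, ‖Ψ i t ω‖ ^ 2 ∂P)
    (hfin : IntervalIntegrable (fun t => ∑' i : ℕ, ∫ ω, ‖Ψ i t ω‖ ^ 2 ∂P)
      MeasureTheory.volume 0 T)
    -- the single stochastic integrals `I i = ∫₀ᵀ Ψ_i dW_i`, satisfying the Itô isometry
    -- and pairwise orthogonality
    (I : ℕ → Ω → H) (hImem : ∀ i, MemLp (I i) 2 P)
    (hI : ∀ i, IsStochInt P T (W i) (Ψ i) (I i))
    (hIiso : ∀ i, ∫ ω, ‖I i ω‖ ^ 2 ∂P = ∫ t in (0:ℝ)..T, ∫ ω, ‖Ψ i t ω‖ ^ 2 ∂P)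
    (hIorth : ∀ i j : ℕ, i ≠ j → ∫ ω, (inner ℝ (I i ω) (I j ω) : ℝ) ∂P = 0) :
    ∃ J : Ω → H, MemLp J 2 P ∧
      Tendsto (fun n : ℕ =>
        ∫ ω, ‖(∑ i ∈ Finset.range n, I i ω) - J ω‖ ^ 2 ∂P) atTop (nhds 0) ∧
      ∫ ω, ‖J ω‖ ^ 2 ∂P = ∫ t in (0:ℝ)..T, ∑' i : ℕ, ∫ ω, ‖Ψ i t ω‖ ^ 2 ∂P :=
  series_stochastic_integral_general P T hT Ψ hL2 hPUC hsummable hfin I hImem hIiso hIorth
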